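/- Let φ be the substitution φ(i) = 0^t(i+1) for i < m-1, φ(m-1) = 0^s with t ≥ s ≥ 1 and t, s both odd. Then the word w = φ^m(0^{(t+1)/2})·0^{(t-s)/2} is a prefix of φ^{m+1}(a)·w for every letter a in {0,...,m-1}. -/

import Mathlib

/-- The canonical substitution associated with a simple Parry number `β` with
`d_β(1) = t t ⋯ t s` (`m` digits): `φ(i) = 0^t (i+1)` for `i ≤ m-2` and
`φ(m-1) = 0^s`.  Letters are encoded as natural numbers `0, …, m-1`. -/
def phi (m t s : ℕ) : ℕ → List ℕ := fun a =>
  if a = m - 1 then List.replicate s 0 else List.replicate t 0 ++ [a + 1]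

/-- Application of a morphism to a finite word. -/
def applyMorph (f : ℕ → List ℕ) (l : List ℕ) : List ℕ := l.flatMap f

/-- `w` is a factor of the fixed point `u_β = lim φⁿ(0)` of the substitution,
i.e. `w` is a factor of some `φⁿ(0)`. -/
def inLang (f : ℕ → List ℕ) (w : List ℕ) : Prop :=
  ∃ k : ℕ, w <:+: (applyMorph f)^[k] [0]


/-!
Write `P = φ^m(0)`, so that `w = P^c · 0^d` with `c = (t+1)/2`, `d = (t-s)/2`. Since `d ≤ t`, the
word `P · 0^d` starts with `0^d` (for `m ≥ 2`, `P` starts with `φ(0) = 0^t 1`), so `w` is a prefix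
of `P · w`, hence of `P^k · w` for every `k`. Now `φ^{m+1}(m-1) = φ^m(0^s) = P^s`, and for any
other letter `φ^{m+1}(a) = P^t · φ^m(a+1)` where `|w| = c|P| + d ≤ t|P|`, so `w` is already a
prefix of `P^t`.
-/

namespace List

variable {α : Type*}

theorem flatten_replicate_append_prefix {u z : List α} (h : z <+: u ++ z) (n : ℕ) :
    (replicate n u).flatten ++ z <+: u ++ ((replicate n u).flatten ++ z) := by
  rw [← append_assoc, ← flatten_cons, ← replicate_succ, replicate_succ', flatten_append,
    flatten_singleton, append_assoc]
  exact (prefix_append_right_inj _).mpr h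

theorem prefix_flatten_replicate_append {u w : List α} (h : w <+: u ++ w) (k : ℕ) :
    w <+: (replicate k u).flatten ++ w := by
  induction k with
  | zero => simp
  | succ k ih =>
    rw [replicate_succ, flatten_cons, append_assoc]
    exact h.trans ((prefix_append_right_inj u).mpr ih)

theorem prefix_flatten_replicate_of_length_le {u w : List α} (h : w <+: u ++ w) {k : ℕ}
    (hk : w.length ≤ k * u.length) : w <+: (replicate k u).flatten :=
  prefix_of_prefix_length_le (prefix_flatten_replicate_append h k) (prefix_append _ _)
    (by simpa using hk)

theorem replicate_prefix_replicate {d n : ℕ} {a : α} (h : d ≤ n) :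
    replicate d a <+: replicate n a :=
  ⟨replicate (n - d) a, by rw [← replicate_add, Nat.add_sub_cancel' h]⟩

end List

open List

section applyMorph

variable (f : ℕ → List ℕ)

@[simp]
theorem applyMorph_nil : applyMorph f [] = [] := rfl

@[simp]
theorem applyMorph_cons (a : ℕ) (l : List ℕ) :
    applyMorph f (a :: l) = f a ++ applyMorph f l :=
  flatMap_cons

theorem applyMorph_append (x y : List ℕ) :
    applyMorph f (x ++ y) = applyMorph f x ++ applyMorph f y :=
  flatMap_append

theorem applyMorph_iterate_append (k : ℕ) (x y : List ℕ) :
    (applyMorph f)^[k] (x ++ y) = (applyMorph f)^[k] x ++ (applyMorph f)^[k] y := by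
  induction k generalizing x y with
  | zero => rfl
  | succ k ih => simp only [Function.iterate_succ_apply, applyMorph_append, ih]

theorem applyMorph_iterate_nil (k : ℕ) : (applyMorph f)^[k] [] = [] :=
  Function.iterate_fixed (applyMorph_nil f) k

theorem applyMorph_iterate_replicate (k n b : ℕ) :
    (applyMorph f)^[k] (replicate n b) = (replicate n ((applyMorph f)^[k] [b])).flatten := by
  induction n with
  | zero => exact applyMorph_iterate_nil f k
  | succ n ih =>
    rw [replicate_succ, replicate_succ, flatten_cons, ← ih, ← singleton_append,
      applyMorph_iterate_append]

theorem applyMorph_iterate_succ_singleton (k a : ℕ) :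
    (applyMorph f)^[k + 1] [a] = (applyMorph f)^[k] (f a) := by
  rw [Function.iterate_succ_apply]
  simp

end applyMorph

section phi

variable {m t s : ℕ}

theorem phi_self_sub_one : phi m t s (m - 1) = replicate s 0 := if_pos rfl

theorem phi_of_ne {a : ℕ} (ha : a ≠ m - 1) : phi m t s a = replicate t 0 ++ [a + 1] :=
  if_neg ha

theorem exists_phi_zero_eq_cons (hs : 1 ≤ s) (ht : 1 ≤ t) : ∃ r, phi m t s 0 = 0 :: r := by
  obtain ⟨s, rfl⟩ := Nat.exists_eq_add_of_le' hs
  obtain ⟨t, rfl⟩ := Nat.exists_eq_add_of_le' ht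
  unfold phi
  split <;> exact ⟨_, rfl⟩

theorem exists_iterate_phi_zero_eq_cons (hs : 1 ≤ s) (ht : 1 ≤ t) (k : ℕ) :
    ∃ r, (applyMorph (phi m t s))^[k] [0] = 0 :: r := by
  induction k with
  | zero => exact ⟨[], rfl⟩
  | succ k ih =>
    obtain ⟨r, hr⟩ := ih
    obtain ⟨r', hr'⟩ := exists_phi_zero_eq_cons (m := m) hs ht
    rw [Function.iterate_succ_apply', hr, applyMorph_cons, hr']
    exact ⟨_, rfl⟩

theorem replicate_prefix_iterate_phi_append (hs : 1 ≤ s) (ht : 1 ≤ t) {d : ℕ} (hd : d ≤ t) :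
    replicate d 0 <+: (applyMorph (phi m t s))^[m] [0] ++ replicate d 0 := by
  obtain _ | _ | n := m
  · exact replicate_prefix_replicate d.le_succ
  · rw [applyMorph_iterate_succ_singleton, Function.iterate_zero_apply,
      phi_self_sub_one (m := 1), ← replicate_add]
    exact replicate_prefix_replicate (Nat.le_add_left d s)
  · obtain ⟨r, hr⟩ := exists_iterate_phi_zero_eq_cons (m := n + 2) hs ht (n + 1)
    rw [Function.iterate_succ_apply', hr, applyMorph_cons, phi_of_ne (by omega), append_assoc,
      append_assoc]
    exact (replicate_prefix_replicate hd).trans (prefix_append _ _)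

end phi

theorem Nat.succ_div_two_mul_add_sub_div_two_le {t s L : ℕ} (hs : 1 ≤ s) (hL : 1 ≤ L) :
    (t + 1) / 2 * L + (t - s) / 2 ≤ t * L :=
  calc (t + 1) / 2 * L + (t - s) / 2
      ≤ (t + 1) / 2 * L + (t - (t + 1) / 2) * L := by
        have : (t - s) / 2 ≤ t - (t + 1) / 2 := by omega
        nlinarith
    _ = t * L := by rw [← add_mul, Nat.add_sub_cancel' (by omega)]

theorem stmt19_general (m t s : ℕ) (hs : 1 ≤ s) (hts : s ≤ t) (a : ℕ) :
    ((applyMorph (phi m t s))^[m] (List.replicate ((t + 1) / 2) 0)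
        ++ List.replicate ((t - s) / 2) 0) <+:
      ((applyMorph (phi m t s))^[m + 1] [a]
        ++ ((applyMorph (phi m t s))^[m] (List.replicate ((t + 1) / 2) 0)
            ++ List.replicate ((t - s) / 2) 0)) := by
  have ht : 1 ≤ t := hs.trans hts
  set w := (applyMorph (phi m t s))^[m] (replicate ((t + 1) / 2) 0) ++ replicate ((t - s) / 2) 0
    with hw_def
  have hw : w <+: (applyMorph (phi m t s))^[m] [0] ++ w := by
    rw [hw_def, applyMorph_iterate_replicate]
    exact flatten_replicate_append_prefix (replicate_prefix_iterate_phi_append hs ht (by omega)) _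
  rw [applyMorph_iterate_succ_singleton]
  rcases eq_or_ne a (m - 1) with rfl | ha
  · rw [phi_self_sub_one, applyMorph_iterate_replicate]
    exact prefix_flatten_replicate_append hw s
  · rw [phi_of_ne ha, applyMorph_iterate_append, applyMorph_iterate_replicate, append_assoc]
    refine (prefix_flatten_replicate_of_length_le hw ?_).trans (prefix_append _ _)
    obtain ⟨r, hr⟩ := exists_iterate_phi_zero_eq_cons (m := m) hs ht m
    rw [hw_def, applyMorph_iterate_replicate, hr]
    simp only [length_append, length_flatten, map_replicate, sum_replicate, length_replicate,
      smul_eq_mul, length_cons]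
    exact Nat.succ_div_two_mul_add_sub_div_two_le hs (Nat.le_add_left 1 _)

/-- For `t, s` both odd, the word `w = φ^m(0^{(t+1)/2})·0^{(t-s)/2}` is a
prefix of `φ^{m+1}(a)·w` for every letter `a`. -/
theorem stmt19 (m t s : ℕ) (hm : 1 ≤ m) (hs : 1 ≤ s) (hts : s ≤ t)
    (ht : Odd t) (hso : Odd s) (a : ℕ) (ha : a < m) :
    ((applyMorph (phi m t s))^[m] (List.replicate ((t + 1) / 2) 0)
        ++ List.replicate ((t - s) / 2) 0) <+:
      ((applyMorph (phi m t s))^[m + 1] [a]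
        ++ ((applyMorph (phi m t s))^[m] (List.replicate ((t + 1) / 2) 0)
            ++ List.replicate ((t - s) / 2) 0)) :=
  stmt19_general m t s hs hts a
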